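/- Every E*-unitary inverse semigroup with zero is continuous: if S is an inverse semigroup with zero such that whenever s * e = e for some idempotent e ≠ 0 the element s is idempotent, then s ≡ t implies s = t for all s, t ∈ S. -/
import Mathlib


/-- An inverse semigroup with zero: every element `s` has a unique generalized
inverse `star s`, and `0` is absorbing. -/
class InverseSemigroupWithZero (S : Type*) extends Semigroup S, Zero S, Star S where
  zero_mul : ∀ s : S, 0 * s = 0
  mul_zero : ∀ s : S, s * 0 = 0
  mul_star_mul_self : ∀ s : S, s * star s * s = s
  star_mul_self_star : ∀ s : S, star s * s * star s = star s
  star_unique : ∀ s x : S, s * x * s = s → x * s * x = x → x = star s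

variable {S : Type*} [InverseSemigroupWithZero S]

/-- The natural partial order on an inverse semigroup: `s ≤ t` iff `t * s⋆ * s = s`. -/
def natLe (s t : S) : Prop := t * star s * s = s

/-- A filter in the inverse semigroup `S` (w.r.t. the natural partial order). -/
def IsFilterS (ξ : Set S) : Prop :=
  ξ.Nonempty ∧ (0 : S) ∉ ξ ∧
    (∀ x ∈ ξ, ∀ y : S, natLe x y → y ∈ ξ) ∧
    ∀ x ∈ ξ, ∀ y ∈ ξ, ∃ z ∈ ξ, natLe z x ∧ natLe z y

/-- An ultrafilter: a filter maximal under inclusion. -/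
def IsUltraS (ξ : Set S) : Prop :=
  IsFilterS ξ ∧ ∀ η : Set S, IsFilterS η → ξ ⊆ η → η = ξ

/-- The set `Ω` of all ultrafilters in `S`. -/
def OmegaAll (S : Type*) [InverseSemigroupWithZero S] : Set (Set S) := {ξ | IsUltraS ξ}

/-- `Ω_e`: the set of ultrafilters `ξ` with `eξ ⊆ ξ`. -/
def OmegaE (e : S) : Set (Set S) := {ξ | IsUltraS ξ ∧ ∀ t ∈ ξ, e * t ∈ ξ}

/-- The map `λₛ` on filters. -/
def lambdaMap (s : S) (ξ : Set S) : Set S := {u | ∃ t ∈ ξ, natLe (s * t) u}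

/-- `y` is dense in `x` (for idempotents `y ≤ x`): there is no nonzero idempotent
`z ≤ x` with `z * y = 0`. -/
def DenseIn (y x : S) : Prop :=
  ∀ z : S, IsIdempotentElem z → z * x = z → z * y = 0 → z = 0

/-- `s` essentially coincides with `t`. -/
def EssEq (s t : S) : Prop :=
  star s * s = star t * t ∧
    ∀ f : S, IsIdempotentElem f → f ≠ 0 → f * (star s * s) = f →
      ∃ e : S, IsIdempotentElem e ∧ e ≠ 0 ∧ e * f = e ∧ s * e = t * e


open InverseSemigroupWithZero in
lemma iswz_star_star (s : S) : star (star s) = s :=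
  (star_unique (star s) s (star_mul_self_star s) (mul_star_mul_self s)).symm

open InverseSemigroupWithZero in
lemma iswz_star_idem {e : S} (he : IsIdempotentElem e) : star e = e :=
  (star_unique e e (by rw [he, he]) (by rw [he, he])).symm

lemma iswz_ext3 {a b c d : S} (h : a * b * c = d) : ∀ y : S, a * (b * (c * y)) = d * y :=
  fun y => by rw [← mul_assoc, ← mul_assoc, h]

lemma iswz_ext2 {a b c : S} (h : a * b = c) : ∀ y : S, a * (b * y) = c * y :=
  fun y => by rw [← mul_assoc, h]

open InverseSemigroupWithZero in
lemma iswz_idem_mul {e f : S} (he : IsIdempotentElem e) (hf : IsIdempotentElem f) :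
    IsIdempotentElem (e * f) := by
  have he' := iswz_ext2 he
  have hf' := iswz_ext2 hf
  set x := star (e * f) with hx
  have h1 : (e * f) * x * (e * f) = e * f := mul_star_mul_self _
  have h2 : x * (e * f) * x = x := star_mul_self_star _
  have h2y : ∀ y : S, x * (e * (f * (x * y))) = x * y := by
    intro y
    have := congrArg (· * y) h2
    simpa only [mul_assoc] using this
  simp only [mul_assoc] at h1
  have key : f * x * e = x := by
    apply star_unique
    · simp only [mul_assoc, he', hf']
      exact h1
    · simp only [mul_assoc, he', hf', h2y]
  have hxx : IsIdempotentElem x := by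
    show x * x = x
    conv_lhs => rw [← key]
    simp only [mul_assoc, he', hf', h2y]
    rw [← mul_assoc, key]
  have hefx : e * f = x := by
    have h3 : star x = e * f := by rw [hx, iswz_star_star]
    rw [← h3, iswz_star_idem hxx]
  show (e*f) * (e*f) = e*f
  rw [hefx]; exact hxx

open InverseSemigroupWithZero in
lemma iswz_idem_comm {e f : S} (he : IsIdempotentElem e) (hf : IsIdempotentElem f) :
    e * f = f * e := by
  have he' := iswz_ext2 he
  have hf' := iswz_ext2 hf
  have hef := iswz_idem_mul he hf
  have hfe := iswz_idem_mul hf he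
  have hef' : e * (f * (e * f)) = e * f := by
    have := hef; simpa only [mul_assoc] using this.eq
  have hfe' : f * (e * (f * e)) = f * e := by
    have := hfe; simpa only [mul_assoc] using this.eq
  have key : f * e = star (e * f) := by
    apply star_unique
    · simp only [mul_assoc, he', hf']; exact hef'
    · simp only [mul_assoc, he', hf']; exact hfe'
  rw [key, iswz_star_idem hef]

open InverseSemigroupWithZero in
lemma iswz_star_mul (a b : S) : star (a * b) = star b * star a := by
  have hp : IsIdempotentElem (b * star b) := by
    show b * star b * (b * star b) = b * star b
    rw [← mul_assoc, mul_star_mul_self]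
  have hq : IsIdempotentElem (star a * a) := by
    show star a * a * (star a * a) = star a * a
    rw [← mul_assoc, star_mul_self_star]
  have hcomm := iswz_idem_comm hp hq
  have ha' := iswz_ext3 (mul_star_mul_self a)
  have hb' := iswz_ext3 (mul_star_mul_self b)
  have hsb' := iswz_ext3 (star_mul_self_star b)
  have hsa' := iswz_ext3 (star_mul_self_star a)
  have hcomm' : ∀ y : S, b * (star b * (star a * (a * y))) = star a * (a * (b * (star b * y))) := by
    intro y
    have := congrArg (· * y) hcomm
    simpa only [mul_assoc] using this
  refine (star_unique (a * b) (star b * star a) ?_ ?_).symm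
  · have hbb : b * (star b * b) = b := by rw [← mul_assoc, mul_star_mul_self]
    simp only [mul_assoc]
    rw [hcomm' b, hbb, ha']
  · have hsaa : star a * (a * star a) = star a := by rw [← mul_assoc, star_mul_self_star]
    simp only [mul_assoc]
    rw [← hcomm' (star a), hsaa, hsb']

open InverseSemigroupWithZero in
theorem eStarUnitary_continuous
    (hE : ∀ s e : S, IsIdempotentElem e → e ≠ 0 → s * e = e → IsIdempotentElem s)
    (s t : S) (h : EssEq s t) : s = t := by
  obtain ⟨hw, hf⟩ := h
  have hsw : s * (star s * s) = s := by rw [← mul_assoc, mul_star_mul_self]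
  have htw : t * (star t * t) = t := by rw [← mul_assoc, mul_star_mul_self]
  by_cases hw0 : star s * s = 0
  · rw [← hsw, ← htw, ← hw, hw0, InverseSemigroupWithZero.mul_zero, InverseSemigroupWithZero.mul_zero]
  · -- w := star s * s is a nonzero idempotent
    have hwidem : IsIdempotentElem (star s * s) := by
      show star s * s * (star s * s) = star s * s
      rw [← mul_assoc, star_mul_self_star]
    obtain ⟨e, he, he0, hew, hst⟩ := hf (star s * s) hwidem hw0 (hwidem)
    have he' := iswz_ext2 he
    have hwe : (star s * s) * e = e := by rw [iswz_idem_comm hwidem he, hew]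
    have hwe' : ∀ y : S, star s * (s * (e * y)) = e * y := by
      intro y
      have := congrArg (· * y) hwe
      simpa only [mul_assoc] using this
    -- e' := s * e * star s
    have he'idem : IsIdempotentElem (s * e * star s) := by
      show (s * e * star s) * (s * e * star s) = s * e * star s
      simp only [mul_assoc, hwe', he']
    have he'ne : s * e * star s ≠ 0 := by
      intro h0
      apply he0
      have h1 : star s * (s * e * star s) * s = star s * 0 * s := by rw [h0]
      rw [InverseSemigroupWithZero.mul_zero, InverseSemigroupWithZero.zero_mul] at h1
      rw [← h1]
      simp only [mul_assoc]
      rw [hew, ← mul_assoc, hwe]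
    have hkey : (t * star s) * (s * e * star s) = s * e * star s := by
      simp only [mul_assoc]
      rw [hwe' (star s), ← mul_assoc t e (star s), ← hst, mul_assoc]
    have hidem : IsIdempotentElem (t * star s) := hE _ _ he'idem he'ne hkey
    have hsym : s * star t = t * star s := by
      have h1 : star (t * star s) = t * star s := iswz_star_idem hidem
      rw [iswz_star_mul, iswz_star_star] at h1
      exact h1
    have hs2 : (t * star s) * t = s := by
      rw [← hsym, mul_assoc, ← hw, hsw]
    have ht2 : (t * star s) * s = t := by
      rw [mul_assoc, hw, htw]
    calc s = (t * star s) * t := hs2.symm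
      _ = (t * star s) * ((t * star s) * s) := by rw [ht2]
      _ = ((t * star s) * (t * star s)) * s := (mul_assoc (t * star s) (t * star s) s).symm
      _ = (t * star s) * s := by rw [hidem]
      _ = t := ht2
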